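/- arXiv:1507.01854 — 4 statements merged into one kernel-verified Lean document; each statement's English description precedes it below -/
import Mathlib

section
/- For all real numbers x, y, z with x ≥ 0 and y + z ≥ 0, the quantity D(x,y,z) = 2·log((e^{x/2} + e^{(y+z)/2})/(e^{-x/2} + e^{(y+z)/2})) satisfies 0 ≤ D(x,y,z) ≤ 4·sinh(x/2)·exp(-(y+z)/2). -/
noncomputable def D (x y z : ℝ) : ℝ :=
  2 * Real.log ((Real.exp (x/2) + Real.exp ((y+z)/2)) / (Real.exp (-x/2) + Real.exp ((y+z)/2)))

/-!
With `a = e^{x/2} ≥ b = e^{-x/2}` and `c = e^{(y+z)/2}`, `D = 2 log ((a + c)/(b + c))`, and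
`log q ≤ q - 1` bounds it by `2 (a - b)/(b + c) ≤ 2 (a - b)/c = 4 sinh (x/2) e^{-(y+z)/2}`.
-/

open Real

section LogRatio

variable {a b c : ℝ}

theorem log_add_div_add_nonneg (hbc : 0 < b + c) (hba : b ≤ a) :
    0 ≤ log ((a + c) / (b + c)) :=
  log_nonneg ((one_le_div hbc).mpr (by linarith))

theorem log_add_div_add_le (hb : 0 ≤ b) (hc : 0 < c) (hba : b ≤ a) :
    log ((a + c) / (b + c)) ≤ (a - b) / c := by
  have hbc : 0 < b + c := by linarith
  calc log ((a + c) / (b + c)) ≤ (a + c) / (b + c) - 1 :=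
        log_le_sub_one_of_pos (div_pos (by linarith) hbc)
    _ = (a - b) / (b + c) := by field_simp; ring
    _ ≤ (a - b) / c := by gcongr; linarith

end LogRatio

theorem four_mul_sinh_mul_exp_neg (x w : ℝ) :
    4 * sinh (x/2) * exp (-w/2) = 2 * ((exp (x/2) - exp (-x/2)) / exp (w/2)) := by
  rw [sinh_eq, neg_div 2 w, neg_div 2 x, exp_neg (w/2)]
  ring

theorem stmt0_general (x y z : ℝ) (hx : 0 ≤ x) :
    0 ≤ D x y z ∧ D x y z ≤ 4 * Real.sinh (x/2) * Real.exp (-(y+z)/2) := by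
  have hba : exp (-x/2) ≤ exp (x/2) := exp_le_exp.mpr (by linarith)
  have hbc : 0 < exp (-x/2) + exp ((y+z)/2) := by positivity
  rw [D, four_mul_sinh_mul_exp_neg]
  exact ⟨by linarith [log_add_div_add_nonneg hbc hba],
    by linarith [log_add_div_add_le (exp_pos (-x/2)).le (exp_pos ((y+z)/2)) hba]⟩

theorem stmt0 (x y z : ℝ) (hx : 0 ≤ x) (hyz : 0 ≤ y + z) :
    0 ≤ D x y z ∧ D x y z ≤ 4 * Real.sinh (x/2) * Real.exp (-(y+z)/2) :=
  stmt0_general x y z hx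
end

section
/- For all real x, y, z, the absolute value of the partial derivative of D(x,y,z) := 2·log((e^{x/2} + e^{(y+z)/2})/(e^{-x/2} + e^{(y+z)/2})) with respect to x is strictly less than 2·cosh(|x|/2)·exp(-(y+z)/2). -/
/-!
With `a = exp ((y+z)/2)`, `D` is `2 (log (e^{x/2} + a) - log (e^{-x/2} + a))`, whose `x`-derivative
is `e^{x/2} / (e^{x/2} + a) + e^{-x/2} / (e^{-x/2} + a)`. Each summand is positive and, since
`a > 0`, strictly smaller than `e^{±x/2} / a`; these bounds add up to `2 cosh (x/2) / a`.
-/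

open Real

lemma hasDerivAt_log_exp_add {f : ℝ → ℝ} {f' a x : ℝ} (hf : HasDerivAt f f' x) (ha : 0 ≤ a) :
    HasDerivAt (fun t => log (exp (f t) + a)) (f' * exp (f x) / (exp (f x) + a)) x := by
  have h := (hf.exp.add_const a).log (by positivity)
  rwa [mul_comm] at h

lemma D_eq_sub_log (t y z : ℝ) :
    D t y z = 2 * (log (exp (t/2) + exp ((y+z)/2)) - log (exp (-t/2) + exp ((y+z)/2))) := by
  rw [D, log_div (by positivity) (by positivity)]

lemma hasDerivAt_D (x y z : ℝ) :
    HasDerivAt (fun t => D t y z)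
      (exp (x/2) / (exp (x/2) + exp ((y+z)/2)) + exp (-x/2) / (exp (-x/2) + exp ((y+z)/2))) x := by
  have hpos : HasDerivAt (fun t : ℝ => t/2) (1/2) x := (hasDerivAt_id x).div_const 2
  have hneg : HasDerivAt (fun t : ℝ => -t/2) (-1/2) x := (hasDerivAt_id x).neg.div_const 2
  have ha : 0 ≤ exp ((y+z)/2) := (exp_pos _).le
  have h := ((hasDerivAt_log_exp_add hpos ha).sub
    (hasDerivAt_log_exp_add hneg ha)).const_mul 2
  rw [funext fun t => D_eq_sub_log t y z]
  exact h.congr_deriv (by ring)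

lemma two_mul_cosh_abs_half_mul_exp (x w : ℝ) :
    2 * cosh (|x|/2) * exp (-w/2) = exp (x/2) / exp (w/2) + exp (-x/2) / exp (w/2) := by
  rw [← abs_two, ← abs_div, abs_two, cosh_abs, cosh_eq, neg_div, exp_neg (w/2), neg_div]
  ring

theorem stmt5 (x y z : ℝ) :
    |deriv (fun t : ℝ => D t y z) x| < 2 * Real.cosh (|x|/2) * Real.exp (-(y+z)/2) := by
  set a := exp ((y+z)/2)
  have ha : 0 < a := exp_pos _
  have hu : exp (x/2) / (exp (x/2) + a) < exp (x/2) / a :=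
    div_lt_div_of_pos_left (exp_pos _) ha (by linarith [exp_pos (x/2)])
  have hv : exp (-x/2) / (exp (-x/2) + a) < exp (-x/2) / a :=
    div_lt_div_of_pos_left (exp_pos _) ha (by linarith [exp_pos (-x/2)])
  rw [(hasDerivAt_D x y z).deriv, abs_of_pos (by positivity), two_mul_cosh_abs_half_mul_exp]
  linarith
end

section
/- Let I be a countable index set, and suppose ℓ₁, ℓ₂ : I → ℝ are functions with ℓ₁(i), ℓ₂(i) > 0, such that for every natural number N the set {i ∈ I : N ≤ ℓ₁(i) + ℓ₂(i) < N+1} has cardinality at most m·(N+1)^k for constants m > 0 and k ∈ ℕ. Then for every L > 0 the series ∑_{i ∈ I} D(L, ℓ₁(i), ℓ₂(i)) converges (is summable), where D(L,x,y) := 2·log((e^{L/2} + e^{(x+y)/2})/(e^{-L/2} + e^{(x+y)/2})). -/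
open Real Finset

theorem summable_comp_of_ncard_preimage_le {α : Type*} {f : α → ℕ} {g c : ℕ → ℝ}
    (hg : ∀ n, 0 ≤ g n) (hfin : ∀ n, (f ⁻¹' {n}).Finite)
    (hcard : ∀ n, ((f ⁻¹' {n}).ncard : ℝ) ≤ c n) (hsum : Summable fun n => c n * g n) :
    Summable fun a => g (f a) := by
  classical
  have hfiber (t : Finset α) (n : ℕ) : (#{a ∈ t | f a = n} : ℝ) ≤ c n := by
    have : #{a ∈ t | f a = n} ≤ (f ⁻¹' {n}).ncard := by
      rw [← Set.ncard_coe_finset]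
      exact Set.ncard_le_ncard (fun a ha => by simp_all) (hfin n)
    exact (Nat.cast_le.2 this).trans (hcard n)
  refine summable_of_sum_le (c := ∑' n, c n * g n) (fun a => hg (f a)) fun t => ?_
  rw [sum_comp]
  calc ∑ n ∈ t.image f, #{a ∈ t | f a = n} • g n
      ≤ ∑ n ∈ t.image f, c n * g n := by
        simp only [nsmul_eq_mul]
        exact sum_le_sum fun n _ => mul_le_mul_of_nonneg_right (hfiber t n) (hg n)
    _ ≤ ∑' n, c n * g n :=
        hsum.sum_le_tsum _ fun n _ => mul_nonneg ((Nat.cast_nonneg _).trans (hcard n)) (hg n)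

theorem preimage_natFloor_singleton {α : Type*} {s : α → ℝ} (hs : ∀ a, 0 ≤ s a) (n : ℕ) :
    (fun a => ⌊s a⌋₊) ⁻¹' {n} = {a | (n : ℝ) ≤ s a ∧ s a < n + 1} := by
  ext a
  exact Nat.floor_eq_iff (hs a)

theorem summable_add_one_pow_mul_exp_neg_nat_mul (k : ℕ) {r : ℝ} (hr : 0 < r) :
    Summable fun n : ℕ => ((n : ℝ) + 1) ^ k * exp (-r * n) := by
  have hshift := (summable_nat_add_iff 1).2 (summable_pow_mul_exp_neg_nat_mul k hr)
  refine (hshift.mul_right (exp r)).congr fun n => ?_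
  push_cast
  rw [mul_assoc, ← exp_add]
  ring_nf

theorem D_nonneg {L : ℝ} (hL : 0 ≤ L) (x y : ℝ) : 0 ≤ D L x y := by
  have : exp (-L / 2) ≤ exp (L / 2) := exp_le_exp.2 (by linarith)
  have := log_nonneg ((one_le_div (by positivity)).2 (by linarith) :
    1 ≤ (exp (L / 2) + exp ((x + y) / 2)) / (exp (-L / 2) + exp ((x + y) / 2)))
  unfold D
  linarith

theorem D_le_four_mul_sinh_mul_exp {L : ℝ} (hL : 0 ≤ L) (x y : ℝ) :
    D L x y ≤ 4 * sinh (L / 2) * exp (-(x + y) / 2) := by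
  set E := exp ((x + y) / 2)
  set A := exp (L / 2) + E
  set B := exp (-L / 2) + E
  have hE : 0 < E := exp_pos _
  have hB : E ≤ B := le_add_of_nonneg_left (exp_pos _).le
  have hB0 : B ≠ 0 := (hE.trans_le hB).ne'
  have hAB : A - B = 2 * sinh (L / 2) := by
    simp only [A, B, sinh_eq, neg_div]; ring
  calc D L x y = 2 * log (A / B) := rfl
    _ ≤ 2 * (A / B - 1) := by gcongr; exact log_le_sub_one_of_pos (by positivity)
    _ = 2 * (A - B) / B := by field_simp
    _ ≤ 2 * (A - B) / E := by gcongr; rw [hAB]; positivity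
    _ = 4 * sinh (L / 2) * exp (-(x + y) / 2) := by
        rw [hAB, neg_div, exp_neg]; ring

theorem stmt10_general (I : Type*) (ℓ₁ ℓ₂ : I → ℝ)
    (hpos : ∀ i, 0 < ℓ₁ i ∧ 0 < ℓ₂ i)
    (m : ℝ) (k : ℕ)
    (hfin : ∀ N : ℕ, {i : I | (N : ℝ) ≤ ℓ₁ i + ℓ₂ i ∧ ℓ₁ i + ℓ₂ i < N + 1}.Finite)
    (hcard : ∀ N : ℕ,
      ({i : I | (N : ℝ) ≤ ℓ₁ i + ℓ₂ i ∧ ℓ₁ i + ℓ₂ i < N + 1}.ncard : ℝ) ≤ m * (N + 1) ^ k)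
    (L : ℝ) (hL : 0 < L) :
    Summable (fun i => D L (ℓ₁ i) (ℓ₂ i)) := by
  have hs (i : I) : 0 ≤ ℓ₁ i + ℓ₂ i := add_nonneg (hpos i).1.le (hpos i).2.le
  have hlevel := preimage_natFloor_singleton hs
  have hfloor : Summable fun i => exp (-(1 / 2) * ⌊ℓ₁ i + ℓ₂ i⌋₊) := by
    refine summable_comp_of_ncard_preimage_le (f := fun i => ⌊ℓ₁ i + ℓ₂ i⌋₊)
      (g := fun n => exp (-(1 / 2) * n)) (c := fun n => m * (n + 1) ^ k)
      (fun n => (exp_pos _).le) (fun n => ?_) (fun n => ?_) ?_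
    · rw [hlevel]; exact hfin n
    · rw [hlevel]; exact hcard n
    · simpa only [mul_assoc] using
        (summable_add_one_pow_mul_exp_neg_nat_mul k one_half_pos).mul_left m
  refine (hfloor.mul_left (4 * sinh (L / 2))).of_nonneg_of_le (fun i => D_nonneg hL.le _ _)
    fun i => (D_le_four_mul_sinh_mul_exp hL.le _ _).trans ?_
  gcongr
  linarith [Nat.floor_le (hs i)]

theorem stmt10 (I : Type*) [Countable I] (ℓ₁ ℓ₂ : I → ℝ)
    (hpos : ∀ i, 0 < ℓ₁ i ∧ 0 < ℓ₂ i)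
    (m : ℝ) (hm : 0 < m) (k : ℕ)
    (hfin : ∀ N : ℕ, {i : I | (N : ℝ) ≤ ℓ₁ i + ℓ₂ i ∧ ℓ₁ i + ℓ₂ i < N + 1}.Finite)
    (hcard : ∀ N : ℕ,
      ({i : I | (N : ℝ) ≤ ℓ₁ i + ℓ₂ i ∧ ℓ₁ i + ℓ₂ i < N + 1}.ncard : ℝ) ≤ m * (N + 1) ^ k)
    (L : ℝ) (hL : 0 < L) :
    Summable (fun i => D L (ℓ₁ i) (ℓ₂ i)) :=
  stmt10_general I ℓ₁ ℓ₂ hpos m k hfin hcard L hL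
end

section
/- For all x, y, L > 0, define f(L) := L·H(x+y, L) − D(L, x, y) with H(u,v) := 1/(1+e^{(u+v)/2}) + 1/(1+e^{(u-v)/2}) and D(L,x,y) := 2·log((e^{L/2} + e^{(x+y)/2})/(e^{-L/2} + e^{(x+y)/2})). Then f(0) = 0 and, for every u > 0, f'(u) = u·(∂H/∂v)(x+y, u) > 0. -/
noncomputable def H (u v : ℝ) : ℝ :=
  1 / (1 + Real.exp ((u+v)/2)) + 1 / (1 + Real.exp ((u-v)/2))

/-!
Since `D` is an antiderivative of `H (x + y)` in `L`, the derivative of `L * H (x + y) L - D L x y`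
collapses to `L * ∂_v H (x + y) L`. From `e^{t/2} / (1 + e^{t/2})² = sech²(t/4) / 4` one gets
`∂_v H (s, u) = (sech²((s - u)/4) - sech²((s + u)/4)) / 8`, which is positive for `s, u > 0`
because `|s - u| < s + u` and `cosh` increases with `|t|`.
-/

open Real

lemma exp_half_div_one_add_exp_half_sq (t : ℝ) :
    exp (t / 2) / (1 + exp (t / 2)) ^ 2 = (cosh (t / 4) ^ 2)⁻¹ / 4 := by
  have hsq : exp (t / 2) = exp (t / 4) ^ 2 := by rw [← exp_nat_mul]; ring_nf
  have hneg : exp (-(t / 4)) = (exp (t / 4))⁻¹ := exp_neg _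
  have hpos := exp_pos (t / 4)
  rw [cosh_eq, hneg, hsq]
  field_simp
  ring

lemma hasDerivAt_one_div_one_add_exp_half (t : ℝ) :
    HasDerivAt (fun t => 1 / (1 + exp (t / 2))) (-(cosh (t / 4) ^ 2)⁻¹ / 8) t := by
  have h := (((hasDerivAt_id' t).div_const 2).exp.const_add 1).inv (by positivity)
  simp only [one_div]
  refine h.congr_deriv ?_
  linear_combination (-1 / 2 : ℝ) * exp_half_div_one_add_exp_half_sq t

lemma hasDerivAt_H (s u : ℝ) :
    HasDerivAt (H s) (((cosh ((s - u) / 4) ^ 2)⁻¹ - (cosh ((s + u) / 4) ^ 2)⁻¹) / 8) u := by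
  have hplus := (hasDerivAt_one_div_one_add_exp_half (s + u)).comp u
    ((hasDerivAt_id' u).const_add s)
  have hminus := (hasDerivAt_one_div_one_add_exp_half (s - u)).comp u
    ((hasDerivAt_id' u).const_sub s)
  exact (hplus.add hminus).congr_deriv (by ring)

lemma deriv_H_pos {s u : ℝ} (hs : 0 < s) (hu : 0 < u) : 0 < deriv (H s) u := by
  rw [(hasDerivAt_H s u).deriv]
  have hcosh : cosh ((s - u) / 4) < cosh ((s + u) / 4) := by
    rw [cosh_lt_cosh, abs_of_pos (by positivity : 0 < (s + u) / 4), abs_lt]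
    constructor <;> linarith
  have hsq : cosh ((s - u) / 4) ^ 2 < cosh ((s + u) / 4) ^ 2 := by
    gcongr
  have := inv_strictAnti₀ (by positivity) hsq
  linarith

lemma hasDerivAt_log_exp_add_exp {g : ℝ → ℝ} {g' L : ℝ} (hg : HasDerivAt g g' L) (c : ℝ) :
    HasDerivAt (fun t => log (exp (g t) + exp c)) (g' / (1 + exp (c - g L))) L := by
  refine ((hg.exp.add_const _).log (by positivity)).congr_deriv ?_
  rw [exp_sub]
  field_simp

lemma D_eq_log_sub_log (L x y : ℝ) :
    D L x y = 2 * (log (exp (L / 2) + exp ((x + y) / 2)) - log (exp (-L / 2) + exp ((x + y) / 2))) := by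
  rw [D, log_div (by positivity) (by positivity)]

lemma hasDerivAt_D_s18 (x y u : ℝ) : HasDerivAt (fun L => D L x y) (H (x + y) u) u := by
  have hplus := hasDerivAt_log_exp_add_exp ((hasDerivAt_id' u).div_const 2) ((x + y) / 2)
  have hminus := hasDerivAt_log_exp_add_exp ((hasDerivAt_neg u).div_const 2) ((x + y) / 2)
  simp only [D_eq_log_sub_log]
  refine ((hplus.sub hminus).const_mul 2).congr_deriv ?_
  rw [H, show (x + y) / 2 - u / 2 = (x + y - u) / 2 by ring,
    show (x + y) / 2 - -u / 2 = (x + y + u) / 2 by ring]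
  ring

theorem stmt18 (x y : ℝ) (hx : 0 < x) (hy : 0 < y) :
    (fun L : ℝ => L * H (x+y) L - D L x y) 0 = 0 ∧
    ∀ u : ℝ, 0 < u →
      HasDerivAt (fun L : ℝ => L * H (x+y) L - D L x y)
        (u * deriv (fun v : ℝ => H (x+y) v) u) u ∧
      0 < u * deriv (fun v : ℝ => H (x+y) v) u := by
  refine ⟨by simp [D_eq_log_sub_log], fun u hu => ⟨?_, mul_pos hu (deriv_H_pos (by linarith) hu)⟩⟩
  have hH := hasDerivAt_H (x + y) u
  refine (((hasDerivAt_id' u).mul hH).sub (hasDerivAt_D_s18 x y u)).congr_deriv ?_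
  rw [hH.deriv]
  ring
end
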